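/- arXiv:1604.04849 — 4 statements merged into one kernel-verified Lean document; each statement's English description precedes it below -/
import Mathlib

section
/- For a finite index set E, product Bernoulli measure P_p on Ω = {0,1}^E with density p ∈ [0,1], and an increasing event A ⊆ Ω, the function p ↦ P_p(A) is differentiable on (0,1) and its derivative equals the sum over e ∈ E of P_p(e is pivotal for A), where e is pivotal for A in configuration ω if exactly one of ω with e set to 1 and ω with e set to 0 lies in A. -/
open Finset

variable {E : Type*}

/-- `upd ω e b` is the configuration `ω` with coordinate `e` set to `b`. -/
def upd (ω : E → Bool) (e : E) (b : Bool) [DecidableEq E] : E → Bool :=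
  fun f => if f = e then b else ω f

/-- An event `A ⊆ {0,1}^E` is increasing (an upper set for the coordinatewise order). -/
def IncrEvent (A : Set (E → Bool)) : Prop :=
  ∀ ⦃ω ω' : E → Bool⦄, ω ≤ ω' → ω ∈ A → ω' ∈ A

/-- `Pr p A` : the probability of the event `A ⊆ {0,1}^E` under product Bernoulli(p) measure. -/
noncomputable def Pr [Fintype E] (p : ℝ) (A : Set (E → Bool)) : ℝ := by
  classical exact
    ∑ ω : E → Bool, if ω ∈ A then ∏ e : E, (if ω e then p else 1 - p) else 0


/-!
`P_p(A)` is a polynomial in `p`, a sum over configurations `ω ∈ A` of the weights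
`∏ f, w_p(ω f)` with `w_p(1) = p` and `w_p(0) = 1 - p`. By the product rule the derivative
of a weight is a sum over coordinates `e`. Pairing each `ω` with its flip at `e`, the
`e`-terms add up to `∑ ω, (1_A(ω^e) - 1_A(ω_e)) P_p(ω)`, and because `A` is increasing the
difference of indicators is exactly the indicator that `e` is pivotal.
-/

open Function

def coordWeight (p : ℝ) (b : Bool) : ℝ := if b then p else 1 - p

def configWeight [Fintype E] (p : ℝ) (ω : E → Bool) : ℝ := ∏ e, coordWeight p (ω e)

theorem hasDerivAt_coordWeight (b : Bool) (p : ℝ) :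
    HasDerivAt (coordWeight · b) (if b then 1 else -1) p := by
  cases b
  · simpa [coordWeight] using (hasDerivAt_id' p).const_sub 1
  · simpa [coordWeight] using hasDerivAt_id' p

section
variable [DecidableEq E]

theorem upd_eq_update (ω : E → Bool) (e : E) (b : Bool) : upd ω e b = update ω e b := by
  funext f; simp [upd, update_apply]

theorem indicator_update_sub_indicator_update {A : Set (E → Bool)} (hA : IncrEvent A)
    (ω : E → Bool) (e : E) :
    A.indicator 1 (update ω e true) - A.indicator 1 (update ω e false) =
      {ω | update ω e false ∉ A ∧ update ω e true ∈ A}.indicator (1 : (E → Bool) → ℝ) ω := by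
  have hmono : update ω e false ∈ A → update ω e true ∈ A :=
    hA (update_mono (Bool.false_le true))
  by_cases h₀ : update ω e false ∈ A
  · simp [h₀, hmono h₀]
  · by_cases h₁ : update ω e true ∈ A <;> simp [h₀, h₁]

variable [Fintype E]

theorem hasDerivAt_configWeight (ω : E → Bool) (p : ℝ) :
    HasDerivAt (configWeight · ω)
      (∑ e, (∏ f ∈ univ.erase e, coordWeight p (ω f)) * if ω e then 1 else -1) p := by
  simpa [configWeight] using
    HasDerivAt.fun_finsetProd (u := univ) fun e _ => hasDerivAt_coordWeight (ω e) p

theorem Pr_eq_sum_indicator_mul (p : ℝ) (A : Set (E → Bool)) :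
    Pr p A = ∑ ω, A.indicator 1 ω * configWeight p ω := by
  unfold Pr
  refine sum_congr (by congr!) fun ω _ => ?_
  by_cases h : ω ∈ A <;> simp [h, configWeight, coordWeight]

theorem sum_update_true_add_update_false {M : Type*} [AddCommMonoid M] (e : E)
    (F : (E → Bool) → M) :
    ∑ ω, (F (update ω e true) + F (update ω e false)) = 2 • ∑ ω, F ω := by
  have hflip : ∑ ω, F (update ω e (!ω e)) = ∑ ω, F ω :=
    Fintype.sum_bijective _ (Involutive.bijective fun ω => by simp) _ _ fun _ => rfl
  rw [two_nsmul]
  nth_rw 1 [← hflip]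
  rw [← sum_add_distrib]
  refine sum_congr rfl fun ω _ => ?_
  cases h : ω e
  · have h₀ : update ω e false = ω := h ▸ update_eq_self e ω
    simp [h₀, add_comm]
  · have h₁ : update ω e true = ω := h ▸ update_eq_self e ω
    simp [h₁, add_comm]

theorem prod_erase_update (p : ℝ) (ω : E → Bool) (e : E) (b : Bool) :
    ∏ f ∈ univ.erase e, coordWeight p (update ω e b f) = ∏ f ∈ univ.erase e, coordWeight p (ω f) :=
  prod_congr rfl fun f hf => by rw [update_of_ne (ne_of_mem_erase hf)]

theorem configWeight_update (p : ℝ) (ω : E → Bool) (e : E) (b : Bool) :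
    configWeight p (update ω e b) = coordWeight p b * ∏ f ∈ univ.erase e, coordWeight p (ω f) := by
  rw [configWeight, ← mul_prod_erase univ _ (mem_univ e), update_self, prod_erase_update]

/-- Sum both sides over the two flips of each `ω` at `e`: on the right the weights of
coordinate `e` add up to `p + (1 - p) = 1`, on the left the signs `±1` remain. -/
theorem sum_mul_prod_erase_mul_sign (e : E) (p : ℝ) (F : (E → Bool) → ℝ) :
    ∑ ω, F ω * ((∏ f ∈ univ.erase e, coordWeight p (ω f)) * if ω e then 1 else -1) =
      ∑ ω, (F (update ω e true) - F (update ω e false)) * configWeight p ω := by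
  refine nsmul_right_injective two_ne_zero ?_
  dsimp only
  rw [← sum_update_true_add_update_false e, ← sum_update_true_add_update_false e]
  refine sum_congr rfl fun ω _ => ?_
  simp only [update_idem, update_self, configWeight_update, prod_erase_update]
  simp only [coordWeight, if_true, Bool.false_eq_true, if_false]
  ring

end

theorem russo_formula_general [Fintype E] [DecidableEq E] (A : Set (E → Bool)) (hA : IncrEvent A)
    (p : ℝ) :
    HasDerivAt (fun q => Pr q A)
      (∑ e : E, Pr p {ω | upd ω e false ∉ A ∧ upd ω e true ∈ A}) p := by
  simp_rw [Pr_eq_sum_indicator_mul, upd_eq_update]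
  refine (HasDerivAt.fun_sum fun ω _ =>
    (hasDerivAt_configWeight ω p).const_mul (A.indicator (1 : (E → Bool) → ℝ) ω)).congr_deriv ?_
  simp_rw [mul_sum]
  rw [sum_comm]
  refine sum_congr rfl fun e _ => ?_
  simp_rw [sum_mul_prod_erase_mul_sign, indicator_update_sub_indicator_update hA]

/-- **Russo's formula**: for an increasing event `A`, `p ↦ P_p(A)` is differentiable on `(0,1)`
with derivative the sum over `e` of the probability that `e` is pivotal for `A`. -/
theorem russo_formula [Fintype E] [DecidableEq E] (A : Set (E → Bool)) (hA : IncrEvent A)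
    (p : ℝ) (hp : p ∈ Set.Ioo (0 : ℝ) 1) :
    HasDerivAt (fun q => Pr q A)
      (∑ e : E, Pr p {ω | upd ω e false ∉ A ∧ upd ω e true ∈ A}) p :=
  russo_formula_general A hA p
end

section
/- Suppose f : (0,1) → [0,1] is differentiable, satisfies f'(p) ≥ c·f(p)(1 − f(p))·log(1/η) for all p ∈ (0,1), where c > 0 and η ∈ (0,1), and f(p₀) = 1/2 for some p₀ ∈ (0,1). Then for all p ∈ (0,1): f(p) ≤ 1/(1 + (1/η)^{c|p − p₀|}) if p < p₀, and f(p) ≥ 1 − 1/(1 + (1/η)^{c|p − p₀|}) if p > p₀. -/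
/-!
Along a solution of `f' ≥ K f (1 - f)` the logit `log (f / (1 - f))` grows at rate at least `K`,
and it vanishes at `p₀`. Since `sigmoid` inverts the logit and is increasing, this gives
`f p ≤ sigmoid (-K (p₀ - p))` before `p₀` and `f p ≥ sigmoid (K (p - p₀))` after it, where
`K = c log (1/η)` turns `sigmoid (-K t)` into `1 / (1 + (1/η)^(c t))`. Points where `f` reaches
`0` or `1` are harmless because `f` is monotone.
-/

open Real Set

lemma monotoneOn_of_forall_hasDerivAt_nonneg {D : Set ℝ} (hD : Convex ℝ D) {f f' : ℝ → ℝ}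
    (hf : ∀ x ∈ D, HasDerivAt f (f' x) x) (hf'₀ : ∀ x ∈ D, 0 ≤ f' x) : MonotoneOn f D :=
  monotoneOn_of_hasDerivWithinAt_nonneg hD
    (fun x hx ↦ (hf x hx).continuousAt.continuousWithinAt)
    (fun x hx ↦ (hf x (interior_subset hx)).hasDerivWithinAt)
    (fun x hx ↦ hf'₀ x (interior_subset hx))

noncomputable def logit (y : ℝ) : ℝ := log y - log (1 - y)

lemma logit_half : logit (1 / 2) = 0 := by norm_num [logit]

lemma logit_one_sub (y : ℝ) : logit (1 - y) = -logit y := by simp [logit]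

lemma sigmoid_logit {y : ℝ} (hy : y ∈ Ioo 0 1) : sigmoid (logit y) = y := by
  have h0 : y ≠ 0 := hy.1.ne'
  rw [sigmoid_def, logit, neg_sub, exp_sub, exp_log hy.1, exp_log (sub_pos.2 hy.2)]
  field_simp
  ring

lemma HasDerivAt.logit {f : ℝ → ℝ} {f' x : ℝ} (hf : HasDerivAt f f' x) (hx : f x ∈ Ioo 0 1) :
    HasDerivAt (fun x ↦ logit (f x)) (f' / (f x * (1 - f x))) x := by
  have h1 : 0 < 1 - f x := sub_pos.2 hx.2
  refine ((hf.log hx.1.ne').sub ((hf.const_sub 1).log h1.ne')).congr_deriv ?_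
  have h0 := hx.1.ne'
  field_simp
  ring

lemma one_div_one_add_exp (t : ℝ) : 1 / (1 + exp t) = sigmoid (-t) := by
  rw [sigmoid_def, neg_neg, one_div]

section Logistic

variable {f f' : ℝ → ℝ} {K a b : ℝ}

lemma logit_add_mul_le (hab : a ≤ b) (hf : ∀ x ∈ Icc a b, HasDerivAt f (f' x) x)
    (hrange : ∀ x ∈ Icc a b, f x ∈ Ioo 0 1)
    (hineq : ∀ x ∈ Icc a b, K * (f x * (1 - f x)) ≤ f' x) :
    logit (f a) + K * (b - a) ≤ logit (f b) := by
  have hmono : MonotoneOn (fun x ↦ logit (f x) - K * x) (Icc a b) := by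
    refine monotoneOn_of_forall_hasDerivAt_nonneg (convex_Icc a b)
      (fun x hx ↦ ((hf x hx).logit (hrange x hx)).sub ((hasDerivAt_id x).const_mul K)) ?_
    intro x hx
    have hpos : 0 < f x * (1 - f x) := mul_pos (hrange x hx).1 (sub_pos.2 (hrange x hx).2)
    rw [mul_one, sub_nonneg, le_div_iff₀ hpos]
    exact hineq x hx
  have := hmono (left_mem_Icc.2 hab) (right_mem_Icc.2 hab) hab
  simp only at this
  linarith

lemma le_sigmoid_logit_sub (hK : 0 ≤ K) (hab : a ≤ b) (hf : ∀ x ∈ Icc a b, HasDerivAt f (f' x) x)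
    (hrange : ∀ x ∈ Icc a b, f x ∈ Icc 0 1)
    (hineq : ∀ x ∈ Icc a b, K * (f x * (1 - f x)) ≤ f' x) (hb : f b < 1) :
    f a ≤ sigmoid (logit (f b) - K * (b - a)) := by
  have hmono : MonotoneOn f (Icc a b) :=
    monotoneOn_of_forall_hasDerivAt_nonneg (convex_Icc a b) hf fun x hx ↦
      (mul_nonneg hK (mul_nonneg (hrange x hx).1 (sub_nonneg.2 (hrange x hx).2))).trans
        (hineq x hx)
  rcases (hrange a (left_mem_Icc.2 hab)).1.eq_or_lt with ha | ha
  · exact ha ▸ (sigmoid_pos _).le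
  have hpos : ∀ x ∈ Icc a b, f x ∈ Ioo 0 1 := fun x hx ↦
    ⟨ha.trans_le (hmono (left_mem_Icc.2 hab) hx hx.1),
      (hmono hx (right_mem_Icc.2 hab) hx.2).trans_lt hb⟩
  calc f a = sigmoid (logit (f a)) := (sigmoid_logit (hpos a (left_mem_Icc.2 hab))).symm
    _ ≤ _ := sigmoid_le (by linarith [logit_add_mul_le hab hf hpos hineq])

lemma sigmoid_logit_add_le (hK : 0 ≤ K) (hab : a ≤ b) (hf : ∀ x ∈ Icc a b, HasDerivAt f (f' x) x)
    (hrange : ∀ x ∈ Icc a b, f x ∈ Icc 0 1)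
    (hineq : ∀ x ∈ Icc a b, K * (f x * (1 - f x)) ≤ f' x) (ha : 0 < f a) :
    sigmoid (logit (f a) + K * (b - a)) ≤ f b := by
  have hneg : ∀ x ∈ Icc (-b) (-a), -x ∈ Icc a b := fun x hx ↦
    ⟨le_neg_of_le_neg hx.2, neg_le_of_neg_le hx.1⟩
  -- The logistic inequality is invariant under the reflection `f ↦ 1 - f (-·)`.
  have h := le_sigmoid_logit_sub (f := fun x ↦ 1 - f (-x)) (f' := fun x ↦ f' (-x)) hK
    (neg_le_neg hab)
    (fun x hx ↦ (((hf (-x) (hneg x hx)).comp x (hasDerivAt_neg x)).const_sub 1).congr_deriv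
      (by ring))
    (fun x hx ↦ ⟨sub_nonneg.2 (hrange _ (hneg x hx)).2, by linarith [(hrange _ (hneg x hx)).1]⟩)
    (fun x hx ↦ by linarith [hineq _ (hneg x hx)])
    (by simpa using ha)
  have harg : -logit (f a) - K * (-a - -b) = -(logit (f a) + K * (b - a)) := by ring
  simp only [neg_neg, logit_one_sub] at h
  rw [harg, sigmoid_neg] at h
  linarith

end Logistic

/-- Integrating the logistic differential inequality
`f' ≥ c f (1−f) log(1/η)` with `f(p₀) = 1/2` yields the quantitative threshold bounds
`f(p) ≤ 1/(1+(1/η)^{c|p−p₀|})` for `p < p₀` and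
`f(p) ≥ 1 − 1/(1+(1/η)^{c|p−p₀|})` for `p > p₀`. -/
theorem logistic_threshold (f f' : ℝ → ℝ) (c η : ℝ) (hc : 0 < c) (hη : η ∈ Set.Ioo (0 : ℝ) 1)
    (hrange : ∀ p ∈ Set.Ioo (0 : ℝ) 1, f p ∈ Set.Icc (0 : ℝ) 1)
    (hderiv : ∀ p ∈ Set.Ioo (0 : ℝ) 1, HasDerivAt f (f' p) p)
    (hineq : ∀ p ∈ Set.Ioo (0 : ℝ) 1, f' p ≥ c * f p * (1 - f p) * Real.log (1 / η))
    (p₀ : ℝ) (hp₀ : p₀ ∈ Set.Ioo (0 : ℝ) 1) (hf₀ : f p₀ = 1 / 2) :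
    ∀ p ∈ Set.Ioo (0 : ℝ) 1,
      (p < p₀ → f p ≤ 1 / (1 + (1 / η) ^ (c * |p - p₀|))) ∧
      (p > p₀ → f p ≥ 1 - 1 / (1 + (1 / η) ^ (c * |p - p₀|))) := by
  intro p hp
  set K := c * Real.log (1 / η)
  have hK : 0 ≤ K := mul_nonneg hc.le (Real.log_nonneg (one_le_one_div hη.1 hη.2.le))
  have hpow : ∀ t, (1 / η) ^ (c * t) = exp (K * t) := fun t ↦ by
    rw [rpow_def_of_pos (one_div_pos.2 hη.1), mul_left_comm, ← mul_assoc]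
  have hineq' : ∀ x ∈ Ioo (0 : ℝ) 1, K * (f x * (1 - f x)) ≤ f' x := fun x hx ↦ by
    linarith [hineq x hx]
  have hsub : ∀ {a b}, a ∈ Ioo (0 : ℝ) 1 → b ∈ Ioo (0 : ℝ) 1 → Icc a b ⊆ Ioo 0 1 :=
    fun ha hb ↦ ordConnected_Ioo.out ha hb
  refine ⟨fun hlt ↦ ?_, fun hgt ↦ ?_⟩
  · have h := le_sigmoid_logit_sub hK hlt.le (fun x hx ↦ hderiv x (hsub hp hp₀ hx))
      (fun x hx ↦ hrange x (hsub hp hp₀ hx)) (fun x hx ↦ hineq' x (hsub hp hp₀ hx))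
      (by norm_num [hf₀])
    rw [hf₀, logit_half, zero_sub] at h
    rwa [abs_sub_comm, abs_of_pos (sub_pos.2 hlt), hpow, one_div_one_add_exp]
  · have h := sigmoid_logit_add_le hK hgt.le (fun x hx ↦ hderiv x (hsub hp₀ hp hx))
      (fun x hx ↦ hrange x (hsub hp₀ hp hx)) (fun x hx ↦ hineq' x (hsub hp₀ hp hx))
      (by norm_num [hf₀])
    rw [hf₀, logit_half, zero_add] at h
    rwa [abs_of_pos (sub_pos.2 hgt), hpow, one_div_one_add_exp, sigmoid_neg, sub_sub_cancel]
end

section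
/- (Burton–Keane trifurcation bound.) Let μ be a translation-invariant probability measure on {0,1}^{E(ℤ^d)} with the finite-energy property. Then μ-almost surely the number of infinite open clusters is not in {2, 3, …} ∪ {∞ with trifurcations}; specifically, the expected number of trifurcation points in a box [−n,n]^d is at most the number of boundary vertices of the box, hence the density of trifurcation points is zero. -/
/-!
Translation invariance gives every vertex the same probability `p` of being a trifurcation, so
the expected number of trifurcations in `[-m, m]^d` is `(2m+1)^d p`. Deterministically, each
trifurcation `t` of a cluster partitions the cluster's vertices in the layer just outside the box
according to the branch at `t` through which they are reached. These partitions have at least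
three classes and are pairwise compatible, so by Burton and Keane's counting lemma the cluster
holds fewer trifurcations than layer vertices. Hence `(2m+1)^d p ≤ (2m+3)^d - (2m+1)^d` for
every `m`, which forces `p = 0`: the expected number of trifurcations in every box is `0`.
-/

open MeasureTheory
open scoped ENNReal

/-- Vertices of the hypercubic lattice `ℤ^d`. -/
abbrev Vd (d : ℕ) := Fin d → ℤ

/-- Edges of `ℤ^d`: the edge `(x, i)` joins `x` to `x + eᵢ`. -/
abbrev Ed (d : ℕ) := Vd d × Fin d

/-- The `i`-th unit vector of `ℤ^d`. -/
def unitv {d : ℕ} (i : Fin d) : Vd d := fun j => if j = i then 1 else 0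

/-- `x` and `y` are joined by an open edge in the bond configuration `ω`. -/
def EdgeOpen {d : ℕ} (ω : Ed d → Bool) (x y : Vd d) : Prop :=
  ∃ i : Fin d, (y = x + unitv i ∧ ω (x, i) = true) ∨ (x = y + unitv i ∧ ω (y, i) = true)

/-- `x` is joined to `y` by an open path. -/
def OpenConn {d : ℕ} (ω : Ed d → Bool) : Vd d → Vd d → Prop :=
  Relation.ReflTransGen (EdgeOpen ω)

/-- The open cluster of the vertex `x`. -/
def Cluster {d : ℕ} (ω : Ed d → Bool) (x : Vd d) : Set (Vd d) := {y | OpenConn ω x y}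

/-- `P` is a product Bernoulli(p) measure: every finite cylinder has the product probability. -/
def BernoulliCyl {ι : Type*} [MeasurableSpace (ι → Bool)] (p : ℝ) (P : Measure (ι → Bool)) : Prop :=
  ∀ (S : Finset ι) (b : ι → Bool),
    P {ω | ∀ i ∈ S, ω i = b i} = ENNReal.ofReal (∏ i ∈ S, if b i then p else 1 - p)

/-- The configuration obtained from `ω` by closing all edges incident to the vertex `x`. -/
noncomputable def closeAt {d : ℕ} (ω : Ed d → Bool) (x : Vd d) : Ed d → Bool := by
  classical exact fun e => if e.1 = x ∨ e.1 + unitv e.2 = x then false else ω e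

/-- `x` is a trifurcation of `ω`: it lies in an infinite open cluster, and closing the
edges at `x` splits this cluster into at least three distinct infinite clusters. -/
def Trifurcation {d : ℕ} (ω : Ed d → Bool) (x : Vd d) : Prop :=
  (Cluster ω x).Infinite ∧
    ∃ y₁ y₂ y₃ : Vd d, y₁ ∈ Cluster ω x ∧ y₂ ∈ Cluster ω x ∧ y₃ ∈ Cluster ω x ∧
      (Cluster (closeAt ω x) y₁).Infinite ∧ (Cluster (closeAt ω x) y₂).Infinite ∧
      (Cluster (closeAt ω x) y₃).Infinite ∧
      Cluster (closeAt ω x) y₁ ≠ Cluster (closeAt ω x) y₂ ∧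
      Cluster (closeAt ω x) y₁ ≠ Cluster (closeAt ω x) y₃ ∧
      Cluster (closeAt ω x) y₂ ≠ Cluster (closeAt ω x) y₃

section Connectivity

variable {d : ℕ} {ω : Ed d → Bool} {s x y z : Vd d}

theorem EdgeOpen.symm (h : EdgeOpen ω x y) : EdgeOpen ω y x := by
  obtain ⟨i, h | h⟩ := h
  exacts [⟨i, .inr h⟩, ⟨i, .inl h⟩]

theorem OpenConn.symm (h : OpenConn ω x y) : OpenConn ω y x := by
  induction h with
  | refl => exact .refl
  | tail _ hyz ih => exact .head hyz.symm ih

theorem OpenConn.trans (hxy : OpenConn ω x y) (hyz : OpenConn ω y z) : OpenConn ω x z :=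
  Relation.ReflTransGen.trans hxy hyz

theorem mem_cluster : y ∈ Cluster ω x ↔ OpenConn ω x y := Iff.rfl

theorem mem_cluster_self : x ∈ Cluster ω x := Relation.ReflTransGen.refl

theorem cluster_eq_of_mem (h : y ∈ Cluster ω x) : Cluster ω y = Cluster ω x :=
  Set.ext fun _ => ⟨(OpenConn.trans h ·), (OpenConn.trans h.symm ·)⟩

theorem cluster_eq_cluster_iff : Cluster ω x = Cluster ω y ↔ OpenConn ω x y :=
  ⟨fun h => show y ∈ Cluster ω x from h ▸ mem_cluster_self, fun h => (cluster_eq_of_mem h).symm⟩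

theorem edgeOpen_closeAt_iff :
    EdgeOpen (closeAt ω s) x y ↔ EdgeOpen ω x y ∧ x ≠ s ∧ y ≠ s := by
  unfold EdgeOpen closeAt
  constructor
  · rintro ⟨i, ⟨rfl, h⟩ | ⟨rfl, h⟩⟩ <;> split_ifs at h with hs <;> rw [not_or] at hs
    exacts [⟨⟨i, .inl ⟨rfl, h⟩⟩, hs⟩, ⟨⟨i, .inr ⟨rfl, h⟩⟩, hs.symm⟩]
  · rintro ⟨⟨i, ⟨rfl, h⟩ | ⟨rfl, h⟩⟩, hx, hy⟩ <;> exact ⟨i, by simp_all⟩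

theorem OpenConn.of_closeAt (h : OpenConn (closeAt ω s) x y) : OpenConn ω x y :=
  Relation.ReflTransGen.mono (fun _ _ h => (edgeOpen_closeAt_iff.mp h).1) _ _ h

theorem cluster_closeAt_self : Cluster (closeAt ω s) s = {s} := by
  refine Set.eq_singleton_iff_unique_mem.mpr ⟨mem_cluster_self, fun y h => ?_⟩
  induction h with
  | refl => rfl
  | tail _ h ih => exact absurd ih (edgeOpen_closeAt_iff.mp h).2.1

theorem OpenConn.exists_edgeOpen_openConn_closeAt (h : OpenConn ω s y) (hy : y ≠ s) :
    ∃ w, EdgeOpen ω s w ∧ OpenConn (closeAt ω s) w y := by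
  induction h with
  | refl => exact absurd rfl hy
  | @tail x y _ hxy ih =>
    by_cases hx : x = s
    · exact ⟨y, hx ▸ hxy, .refl⟩
    · obtain ⟨w, hw, hwx⟩ := ih hx
      exact ⟨w, hw, hwx.tail (edgeOpen_closeAt_iff.mpr ⟨hxy, hx, hy⟩)⟩

theorem OpenConn.closeAt_of_not_mem {t : Vd d} (h : OpenConn (closeAt ω t) x y)
    (hs : s ∉ Cluster (closeAt ω t) x) : OpenConn (closeAt ω s) x y := by
  induction h with
  | refl => exact .refl
  | @tail y z hxy hyz ih =>
    have hy : y ≠ s := fun h => hs (h ▸ hxy)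
    have hz : z ≠ s := fun h => hs (h ▸ hxy.tail hyz)
    exact ih.tail (edgeOpen_closeAt_iff.mpr ⟨(edgeOpen_closeAt_iff.mp hyz).1, hy, hz⟩)

/-- The branch at `t` through which `y` is reached avoids `s`. -/
theorem openConn_closeAt_of_not_openConn_closeAt {t : Vd d} (hts : t ≠ s)
    (hty : OpenConn ω t y) (hy : y ≠ t) (hsy : ¬ OpenConn (closeAt ω t) s y) :
    OpenConn (closeAt ω s) t y := by
  obtain ⟨w, htw, hwy⟩ := hty.exists_edgeOpen_openConn_closeAt hy
  have hsw : s ∉ Cluster (closeAt ω t) w := fun h => hsy (h.symm.trans hwy)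
  have hws : w ≠ s := fun h => hsw (h ▸ mem_cluster_self)
  exact .head (edgeOpen_closeAt_iff.mpr ⟨htw, hts, hws⟩) (hwy.closeAt_of_not_mem hsw)

end Connectivity

section Box

variable {d : ℕ}

noncomputable def cube (d m : ℕ) : Finset (Vd d) :=
  Fintype.piFinset fun _ => Finset.Icc (-(m : ℤ)) m

theorem mem_cube {m : ℕ} {x : Vd d} : x ∈ cube d m ↔ ∀ i, |x i| ≤ (m : ℤ) := by
  simp only [cube, Fintype.mem_piFinset, Finset.mem_Icc, abs_le]

theorem card_cube (d m : ℕ) : (cube d m).card = (2 * m + 1) ^ d := by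
  simp only [cube, Fintype.card_piFinset, Int.card_Icc, Finset.prod_const, Finset.card_univ,
    Fintype.card_fin]
  congr 1
  omega

theorem cube_subset_cube_succ (m : ℕ) : cube d m ⊆ cube d (m + 1) := fun x hx =>
  mem_cube.mpr fun i => (mem_cube.mp hx i).trans (by omega)

theorem EdgeOpen.abs_sub_le {ω : Ed d → Bool} {x y : Vd d} (h : EdgeOpen ω x y) (j : Fin d) :
    |y j - x j| ≤ 1 := by
  obtain ⟨i, ⟨rfl, -⟩ | ⟨rfl, -⟩⟩ := h <;> by_cases hj : j = i <;> simp [unitv, hj]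

theorem EdgeOpen.mem_cube_succ {ω : Ed d → Bool} {x y : Vd d} {m : ℕ} (h : EdgeOpen ω x y)
    (hx : x ∈ cube d m) : y ∈ cube d (m + 1) := by
  refine mem_cube.mpr fun i => ?_
  have := abs_sub_abs_le_abs_sub (y i) (x i)
  have := h.abs_sub_le i
  have := mem_cube.mp hx i
  push_cast
  omega

theorem OpenConn.exists_mem_cube_succ_sdiff {ω : Ed d → Bool} {x y : Vd d} {m : ℕ}
    (h : OpenConn ω x y) (hx : x ∈ cube d (m + 1)) (hy : y ∉ cube d m) :
    ∃ z ∈ cube d (m + 1) \ cube d m, OpenConn ω x z := by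
  induction h using Relation.ReflTransGen.head_induction_on with
  | refl => exact ⟨y, Finset.mem_sdiff.mpr ⟨hx, hy⟩, .refl⟩
  | @head x w hxw _ ih =>
    by_cases hxm : x ∈ cube d m
    · obtain ⟨z, hz, hwz⟩ := ih (hxw.mem_cube_succ hxm)
      exact ⟨z, hz, .head hxw hwz⟩
    · exact ⟨x, Finset.mem_sdiff.mpr ⟨hx, hxm⟩, .refl⟩

end Box

section Compatible

open Finset

variable {α β ι : Type*}

/-- A labelling `f : α → β` stands for the partition of `Y` into the fibres of `f`; two such
partitions are compatible if one class of each covers `Y`. -/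
def CompatibleOn (Y : Finset α) (f g : α → β) : Prop := ∃ a b, ∀ y ∈ Y, f y = a ∨ g y = b

theorem CompatibleOn.mono {Y Y' : Finset α} {f g : α → β} (h : CompatibleOn Y f g)
    (hY : Y' ⊆ Y) : CompatibleOn Y' f g :=
  let ⟨a, b, h⟩ := h; ⟨a, b, fun y hy => h y (hY hy)⟩

variable [DecidableEq β]

theorem card_filter_add_two_le {Y : Finset α} {f : α → β} (h3 : 3 ≤ (Y.image f).card) (c : β) :
    (Y.filter (f · = c)).card + 2 ≤ Y.card := by
  have hlabels : (Y.filter (¬ f · = c)).image f = (Y.image f).erase c := by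
    ext; aesop
  have := card_image_le (s := Y.filter (¬ f · = c)) (f := f)
  have := (Y.image f).pred_card_le_card_erase (a := c)
  rw [← hlabels] at this
  have := card_filter_add_card_filter_not (s := Y) (f · = c)
  omega

theorem mem_image_of_forall_or {Y : Finset α} {f g : α → β} {a b : β}
    (h2 : 2 ≤ (Y.image g).card) (hcover : ∀ y ∈ Y, f y = a ∨ g y = b) : a ∈ Y.image f := by
  by_contra ha
  have hconst : Y.image g ⊆ {b} := fun z hz => by
    obtain ⟨y, hy, rfl⟩ := mem_image.mp hz
    exact mem_singleton.mpr ((hcover y hy).resolve_left fun h => ha (h ▸ mem_image_of_mem f hy))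
  have := card_le_card hconst
  rw [card_singleton] at this
  omega

theorem card_add_card_image_le {Y : Finset α} {f : α → β} {T : Finset ι} {a : ι → β}
    (ha : ∀ j ∈ T, a j ∈ Y.image f)
    (hclass : ∀ c ∈ Y.image f, (T.filter (a · = c)).card + 1 ≤ (Y.filter (f · = c)).card) :
    T.card + (Y.image f).card ≤ Y.card :=
  calc T.card + (Y.image f).card = ∑ c ∈ Y.image f, ((T.filter (a · = c)).card + 1) := by
        rw [sum_add_distrib, ← card_eq_sum_card_fiberwise ha, sum_const, smul_eq_mul, mul_one]
    _ ≤ ∑ c ∈ Y.image f, (Y.filter (f · = c)).card := sum_le_sum hclass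
    _ = Y.card := (card_eq_sum_card_image _ _).symm

variable [DecidableEq α]

theorem image_insert_filter_eq {Y : Finset α} {f g : α → β} {c b : β} {y₀ : α} (hy₀ : y₀ ∈ Y)
    (hfy₀ : f y₀ ≠ c) (hcover : ∀ y ∈ Y, f y = c ∨ g y = b) :
    (insert y₀ (Y.filter (f · = c))).image g = Y.image g := by
  refine Subset.antisymm (image_subset_image (insert_subset hy₀ (filter_subset _ _))) ?_
  intro z hz
  obtain ⟨y, hy, rfl⟩ := mem_image.mp hz
  rcases hcover y hy with hfy | hgy
  · exact mem_image_of_mem g (mem_insert_of_mem (mem_filter.mpr ⟨hy, hfy⟩))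
  · rw [hgy, ← (hcover y₀ hy₀).resolve_left hfy₀]
    exact mem_image_of_mem g (mem_insert_self _ _)

theorem card_add_two_le_of_pairwise_compatibleOn [DecidableEq ι] {Y : Finset α} {s : Finset ι}
    {f : ι → α → β} (hs : s.Nonempty) (h3 : ∀ i ∈ s, 3 ≤ (Y.image (f i)).card)
    (hf : (s : Set ι).Pairwise fun i j => CompatibleOn Y (f i) (f j)) :
    s.card + 2 ≤ Y.card := by
  induction hY : Y.card using Nat.strong_induction_on generalizing Y s with
  | _ n ih =>
  subst hY
  obtain ⟨i₀, hi₀⟩ := hs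
  have hcover : ∀ j ∈ s.erase i₀, ∃ a b, ∀ y ∈ Y, f i₀ y = a ∨ f j y = b := fun j hj =>
    hf hi₀ (mem_of_mem_erase hj) (ne_of_mem_erase hj).symm
  obtain ⟨c₀, -⟩ := card_pos.mp (by have := h3 i₀ hi₀; omega : 0 < (Y.image (f i₀)).card)
  have : Nonempty β := ⟨c₀⟩
  choose! a b hab using hcover
  -- Collapsing everything outside the class `c` of `f i₀` to one point `y₀` gives a smaller
  -- instance for the partitions attached to `c`.
  have hclass : ∀ c ∈ Y.image (f i₀),
      ((s.erase i₀).filter (a · = c)).card + 1 ≤ (Y.filter (f i₀ · = c)).card := by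
    intro c hc
    rcases ((s.erase i₀).filter (a · = c)).eq_empty_or_nonempty with hG | hG
    · obtain ⟨y, hy, hyc⟩ := mem_image.mp hc
      simpa [hG] using card_pos.mpr ⟨y, mem_filter.mpr ⟨hy, hyc⟩⟩
    obtain ⟨_, hc₀, hc₀c⟩ := exists_mem_ne (s := Y.image (f i₀)) (by have := h3 i₀ hi₀; omega) c
    obtain ⟨y₀, hy₀, rfl⟩ := mem_image.mp hc₀
    have hcard : (insert y₀ (Y.filter (f i₀ · = c))).card = (Y.filter (f i₀ · = c)).card + 1 :=
      card_insert_of_notMem fun h => hc₀c (mem_filter.mp h).2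
    have hG_image : ∀ j ∈ (s.erase i₀).filter (a · = c),
        (insert y₀ (Y.filter (f i₀ · = c))).image (f j) = Y.image (f j) := by
      intro j hj
      obtain ⟨hjs, rfl⟩ := mem_filter.mp hj
      exact image_insert_filter_eq hy₀ hc₀c (hab j hjs)
    have := ih _ (by have := card_filter_add_two_le (h3 i₀ hi₀) c; omega) hG
      (fun j hj => hG_image j hj ▸ h3 j (by simp_all))
      (fun i hi j hj hij => (hf (by simp_all) (by simp_all) hij).mono
        (insert_subset hy₀ (filter_subset _ _))) hcard
    omega
  have ha : ∀ j ∈ s.erase i₀, a j ∈ Y.image (f i₀) := fun j hj =>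
    mem_image_of_forall_or (by have := h3 j (mem_of_mem_erase hj); omega) (hab j hj)
  have := card_add_card_image_le ha hclass
  have := h3 i₀ hi₀
  have := card_erase_add_one hi₀
  omega

end Compatible

section Deterministic

open Finset
open scoped Classical

variable {d : ℕ} {ω : Ed d → Bool} {m : ℕ} {t : Vd d}

noncomputable def shell (d m : ℕ) : Finset (Vd d) := cube d (m + 1) \ cube d m

theorem card_shell (d m : ℕ) : (shell d m).card = (2 * m + 3) ^ d - (2 * m + 1) ^ d := by
  rw [shell, card_sdiff_of_subset (cube_subset_cube_succ m), card_cube, card_cube]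
  ring_nf

theorem exists_mem_shell_of_infinite_cluster_closeAt {y : Vd d} (ht : t ∈ cube d m)
    (hy : OpenConn ω t y) (hinf : (Cluster (closeAt ω t) y).Infinite) :
    ∃ z ∈ shell d m, OpenConn ω t z ∧ Cluster (closeAt ω t) z = Cluster (closeAt ω t) y := by
  have hyt : y ≠ t := by
    rintro rfl
    exact hinf (cluster_closeAt_self ▸ Set.finite_singleton y)
  obtain ⟨w, htw, hwy⟩ := hy.exists_edgeOpen_openConn_closeAt hyt
  rw [← cluster_eq_cluster_iff.mpr hwy] at hinf ⊢
  obtain ⟨p, hwp, hp⟩ := hinf.exists_notMem_finset (cube d m)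
  obtain ⟨z, hz, hwz⟩ := OpenConn.exists_mem_cube_succ_sdiff hwp (htw.mem_cube_succ ht) hp
  exact ⟨z, hz, .head htw hwz.of_closeAt, cluster_eq_of_mem hwz⟩

theorem three_le_card_image_cluster_closeAt (ht : Trifurcation ω t) (htm : t ∈ cube d m) :
    3 ≤ (((shell d m).filter (Cluster ω · = Cluster ω t)).image (Cluster (closeAt ω t))).card := by
  obtain ⟨-, y₁, y₂, y₃, hy₁, hy₂, hy₃, hinf₁, hinf₂, hinf₃, h₁₂, h₁₃, h₂₃⟩ := ht
  have hmem : ∀ y ∈ Cluster ω t, (Cluster (closeAt ω t) y).Infinite →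
      Cluster (closeAt ω t) y ∈
        ((shell d m).filter (Cluster ω · = Cluster ω t)).image (Cluster (closeAt ω t)) := by
    intro y hy hinf
    obtain ⟨z, hz, htz, hzy⟩ := exists_mem_shell_of_infinite_cluster_closeAt htm hy hinf
    exact mem_image.mpr ⟨z, mem_filter.mpr ⟨hz, cluster_eq_of_mem htz⟩, hzy⟩
  exact two_lt_card_iff.mpr ⟨_, _, _, hmem y₁ hy₁ hinf₁, hmem y₂ hy₂ hinf₂, hmem y₃ hy₃ hinf₃,
    h₁₂, h₁₃, h₂₃⟩

/-- The branch at `t` containing `s` and the branch at `s` containing `t` cover `Y`. -/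
theorem compatibleOn_cluster_closeAt {s : Vd d} {Y : Finset (Vd d)} (hts : t ≠ s)
    (hY : ∀ y ∈ Y, OpenConn ω t y ∧ y ≠ t) :
    CompatibleOn Y (Cluster (closeAt ω t)) (Cluster (closeAt ω s)) := by
  refine ⟨Cluster (closeAt ω t) s, Cluster (closeAt ω s) t, fun y hy => ?_⟩
  by_cases hsy : OpenConn (closeAt ω t) s y
  · exact .inl (cluster_eq_cluster_iff.mpr hsy).symm
  · exact .inr (cluster_eq_cluster_iff.mpr
      (openConn_closeAt_of_not_openConn_closeAt hts (hY y hy).1 (hY y hy).2 hsy)).symm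

theorem card_trifurcation_filter_cluster_le (C : Set (Vd d)) :
    (((cube d m).filter (Trifurcation ω)).filter (Cluster ω · = C)).card ≤
      ((shell d m).filter (Cluster ω · = C)).card := by
  rcases (((cube d m).filter (Trifurcation ω)).filter (Cluster ω · = C)).eq_empty_or_nonempty
    with hT | hT
  · simp [hT]
  have hfacts : ∀ t ∈ ((cube d m).filter (Trifurcation ω)).filter (Cluster ω · = C),
      t ∈ cube d m ∧ Trifurcation ω t ∧ Cluster ω t = C := by
    simp only [mem_filter]; tauto
  refine (Nat.le_add_right _ 2).trans (card_add_two_le_of_pairwise_compatibleOn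
    (f := fun t => Cluster (closeAt ω t)) hT (fun t ht => ?_)
    (fun t ht s _ hts => compatibleOn_cluster_closeAt (ω := ω) hts fun y hy => ?_))
  · obtain ⟨htm, htrif, rfl⟩ := hfacts t ht
    exact three_le_card_image_cluster_closeAt htrif htm
  · obtain ⟨htm, -, rfl⟩ := hfacts t ht
    obtain ⟨hys, hyC⟩ := mem_filter.mp hy
    refine ⟨(cluster_eq_cluster_iff.mp hyC).symm, ?_⟩
    rintro rfl
    exact (mem_sdiff.mp hys).2 htm

theorem card_trifurcation_le_card_shell (ω : Ed d → Bool) (m : ℕ) :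
    ((cube d m).filter (Trifurcation ω)).card ≤ (shell d m).card := by
  set T := (cube d m).filter (Trifurcation ω)
  calc T.card = ∑ C ∈ T.image (Cluster ω), (T.filter (Cluster ω · = C)).card :=
        card_eq_sum_card_image _ _
    _ ≤ ∑ C ∈ T.image (Cluster ω), ((shell d m).filter (Cluster ω · = C)).card :=
        sum_le_sum fun C _ => card_trifurcation_filter_cluster_le C
    _ = ((shell d m).filter (Cluster ω · ∈ T.image (Cluster ω))).card :=
        sum_card_fiberwise_eq_card_filter _ _ _
    _ ≤ (shell d m).card := card_filter_le _ _

end Deterministic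

section Measurability

variable {d : ℕ}

theorem measurable_reflTransGen {Ω V : Type*} [MeasurableSpace Ω] [Countable V]
    {r : Ω → V → V → Prop} (hr : ∀ x y, Measurable fun ω => r ω x y) (x y : V) :
    Measurable fun ω => Relation.ReflTransGen (r ω) x y := by
  have hchain : ∀ (l : List V) (x : V), Measurable fun ω => List.IsChain (r ω) (x :: l) := by
    intro l
    induction l with
    | nil => simp only [List.IsChain.singleton, measurable_const, implies_true]
    | cons z l ih => simpa only [List.isChain_cons_cons] using fun x => (hr x z).and (ih z)
  have hpath : (fun ω => Relation.ReflTransGen (r ω) x y) = fun ω => ∃ l : List V,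
      List.IsChain (r ω) (x :: l) ∧ (x :: l).getLast (List.cons_ne_nil _ _) = y := by
    ext ω
    exact ⟨List.exists_isChain_cons_of_relationReflTransGen,
      fun ⟨l, hl, hy⟩ => List.relationReflTransGen_of_exists_isChain_cons l hl hy⟩
  rw [hpath]
  exact .exists fun l => (hchain l x).and measurable_const

@[fun_prop]
theorem measurable_edgeOpen (x y : Vd d) : Measurable fun ω : Ed d → Bool => EdgeOpen ω x y := by
  unfold EdgeOpen
  fun_prop

@[fun_prop]
theorem measurable_openConn (x y : Vd d) : Measurable fun ω : Ed d → Bool => OpenConn ω x y :=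
  measurable_reflTransGen measurable_edgeOpen x y

@[fun_prop]
theorem Measurable.infinite_cluster {Ω : Type*} [MeasurableSpace Ω] {f : Ω → Ed d → Bool}
    (hf : Measurable f) (x : Vd d) : Measurable fun a => (Cluster (f a) x).Infinite := by
  have hinf : ∀ ω : Ed d → Bool,
      (Cluster ω x).Infinite ↔ ∀ F : Finset (Vd d), ∃ y, OpenConn ω x y ∧ y ∉ F :=
    fun ω => ⟨fun h F => h.exists_notMem_finset F, fun h hfin =>
      let ⟨y, hy, hyF⟩ := h hfin.toFinset; hyF (hfin.mem_toFinset.mpr hy)⟩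
  simp only [hinf]
  fun_prop

@[fun_prop]
theorem measurable_closeAt (x : Vd d) : Measurable fun ω : Ed d → Bool => closeAt ω x := by
  unfold closeAt
  fun_prop

theorem measurableSet_trifurcation (x : Vd d) :
    MeasurableSet {ω : Ed d → Bool | Trifurcation ω x} := by
  simp only [Trifurcation, mem_cluster, Ne, cluster_eq_cluster_iff]
  refine measurableSet_setOfPred.mpr ?_
  fun_prop

end Measurability

section Translation

variable {d : ℕ} {ω : Ed d → Bool} {v x y : Vd d}

def shift (v : Vd d) (ω : Ed d → Bool) : Ed d → Bool := fun e => ω (e.1 + v, e.2)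

@[fun_prop]
theorem measurable_shift (v : Vd d) : Measurable (shift v) := by
  unfold shift
  fun_prop

theorem edgeOpen_shift : EdgeOpen (shift v ω) x y ↔ EdgeOpen ω (x + v) (y + v) := by
  simp only [EdgeOpen, shift, add_right_comm _ v, add_left_inj]

theorem openConn_shift : OpenConn (shift v ω) x y ↔ OpenConn ω (x + v) (y + v) := by
  refine ⟨fun h => Relation.ReflTransGen.lift (· + v) (fun _ _ => edgeOpen_shift.mp) _ _ h,
    fun h => ?_⟩
  simpa [OpenConn, Function.onFun] using Relation.ReflTransGen.lift (· - v)
    (fun _ _ h => (edgeOpen_shift (v := v)).mpr (by simpa using h)) _ _ h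

theorem cluster_shift : Cluster (shift v ω) x = (· + v) ⁻¹' Cluster ω (x + v) :=
  Set.ext fun _ => openConn_shift

theorem closeAt_shift : closeAt (shift v ω) x = shift v (closeAt ω (x + v)) := by
  funext e
  simp only [closeAt, shift, add_right_comm _ v, add_left_inj]

theorem infinite_preimage_add_right_iff {S : Set (Vd d)} :
    ((· + v) ⁻¹' S).Infinite ↔ S.Infinite :=
  ⟨fun h hS => h (hS.preimage (add_left_injective v).injOn),
    fun h => h.preimage fun z _ => ⟨z - v, sub_add_cancel z v⟩⟩

theorem trifurcation_shift : Trifurcation (shift v ω) x ↔ Trifurcation ω (x + v) := by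
  have hinj : ∀ S T : Set (Vd d), (· + v) ⁻¹' S = (· + v) ⁻¹' T ↔ S = T :=
    fun _ _ => (Set.preimage_injective.mpr (add_right_surjective v)).eq_iff
  simp only [Trifurcation, closeAt_shift, cluster_shift, infinite_preimage_add_right_iff,
    Set.mem_preimage, ne_eq, hinj]
  exact and_congr_right fun _ => ⟨fun ⟨y₁, y₂, y₃, h⟩ => ⟨y₁ + v, y₂ + v, y₃ + v, h⟩,
    fun ⟨y₁, y₂, y₃, h⟩ => ⟨y₁ - v, y₂ - v, y₃ - v, by simpa using h⟩⟩

end Translation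

section Density

open Filter Topology Finset

variable {d : ℕ}

theorem tendsto_card_shell_div_card_cube (d : ℕ) :
    Tendsto (fun m => ((shell d m).card : ℝ) / (cube d m).card) atTop (𝓝 0) := by
  have hratio : ∀ m : ℕ, ((shell d m).card : ℝ) / (cube d m).card =
      (1 + 2 / (2 * (m : ℝ) + 1)) ^ d - 1 := by
    intro m
    have hpos : (2 * m + 1 : ℝ) ≠ 0 := by positivity
    have hbase : 1 + 2 / (2 * (m : ℝ) + 1) = (2 * m + 3) / (2 * m + 1) := by field_simp; ring
    rw [card_shell, card_cube, Nat.cast_sub (Nat.pow_le_pow_left (by omega) d)]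
    push_cast
    rw [hbase, div_pow, sub_div, div_self (pow_ne_zero d hpos)]
  have hbase : Tendsto (fun m : ℕ => 1 + 2 / (2 * (m : ℝ) + 1)) atTop (𝓝 1) := by
    simpa using tendsto_const_nhds.add (tendsto_const_nhds.div_atTop
      (tendsto_natCast_atTop_atTop.const_mul_atTop (by norm_num : (0 : ℝ) < 2)
        |>.atTop_add tendsto_const_nhds))
  simpa [hratio] using (hbase.pow d).sub_const 1

theorem eq_zero_of_forall_card_cube_mul_le {p c : ℝ≥0∞} (hc : c ≠ ⊤)
    (h : ∀ m, ((cube d m).card : ℝ≥0∞) * p ≤ (shell d m).card * c) : p = 0 := by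
  have hp : p ≠ ⊤ := by
    have := h 0
    simp only [card_cube, mul_zero, zero_add, one_pow, Nat.cast_one, one_mul] at this
    exact ne_top_of_le_ne_top (ENNReal.mul_ne_top (ENNReal.natCast_ne_top _) hc) this
  have hle : ∀ m, p.toReal ≤ ((shell d m).card : ℝ) / (cube d m).card * c.toReal := by
    intro m
    have hpos : (0 : ℝ) < (cube d m).card := by simp [card_cube]; positivity
    rw [div_mul_eq_mul_div, le_div_iff₀ hpos, mul_comm]
    simpa [ENNReal.toReal_mul] using
      ENNReal.toReal_mono (ENNReal.mul_ne_top (ENNReal.natCast_ne_top _) hc) (h m)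
  have hlim := (tendsto_card_shell_div_card_cube d).mul_const c.toReal
  rw [zero_mul] at hlim
  have := le_antisymm (ge_of_tendsto' hlim hle) ENNReal.toReal_nonneg
  exact ((ENNReal.toReal_eq_zero_iff _).mp this).resolve_right hp

open scoped Classical in
theorem lintegral_card_filter {Ω ι : Type*} [MeasurableSpace Ω] (μ : Measure Ω)
    (s : Finset ι) {p : ι → Ω → Prop} (hp : ∀ i ∈ s, MeasurableSet {ω | p i ω}) :
    ∫⁻ ω, ((s.filter (p · ω)).card : ℝ≥0∞) ∂μ = ∑ i ∈ s, μ {ω | p i ω} := by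
  have hind : ∀ ω, ((s.filter (p · ω)).card : ℝ≥0∞) = ∑ i ∈ s, {ω | p i ω}.indicator 1 ω := by
    intro ω
    simp only [card_filter, Nat.cast_sum, Nat.cast_ite, Nat.cast_one, Nat.cast_zero,
      Set.indicator_apply, Set.mem_ofPred_eq, Pi.one_apply]
  simp_rw [hind]
  rw [lintegral_finsetSum _ fun i hi => measurable_one.indicator (hp i hi)]
  exact sum_congr rfl fun i hi => lintegral_indicator_one (hp i hi)

theorem measure_trifurcation_eq (μ : Measure (Ed d → Bool))
    (htrans : ∀ v : Vd d, μ.map (shift v) = μ) (x : Vd d) :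
    μ {ω | Trifurcation ω x} = μ {ω | Trifurcation ω 0} := by
  have hpre : {ω | Trifurcation ω x} = shift x ⁻¹' {ω | Trifurcation ω 0} := by
    ext ω
    simp [trifurcation_shift]
  rw [hpre, ← Measure.map_apply (measurable_shift x) (measurableSet_trifurcation 0), htrans]

theorem measure_trifurcation_eq_zero (μ : Measure (Ed d → Bool)) [IsFiniteMeasure μ]
    (htrans : ∀ v : Vd d, μ.map (shift v) = μ) (x : Vd d) : μ {ω | Trifurcation ω x} = 0 := by
  classical
  rw [measure_trifurcation_eq μ htrans]
  refine eq_zero_of_forall_card_cube_mul_le (d := d) (measure_ne_top μ Set.univ) fun m => ?_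
  calc ((cube d m).card : ℝ≥0∞) * μ {ω | Trifurcation ω 0}
      = ∫⁻ ω, (((cube d m).filter (Trifurcation ω)).card : ℝ≥0∞) ∂μ := by
        rw [lintegral_card_filter μ (cube d m) (p := fun x ω => Trifurcation ω x)
          fun x _ => measurableSet_trifurcation x]
        simp [measure_trifurcation_eq μ htrans]
    _ ≤ ∫⁻ _, ((shell d m).card : ℝ≥0∞) ∂μ :=
        lintegral_mono fun ω => Nat.cast_le.mpr (card_trifurcation_le_card_shell ω m)
    _ = (shell d m).card * μ Set.univ := lintegral_const _

end Density

theorem ncard_setOf_abs_le_and {d : ℕ} (n : ℕ) (P : Vd d → Prop) [DecidablePred P] :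
    {x : Vd d | (∀ i, |x i| ≤ (n : ℤ)) ∧ P x}.ncard = ((cube d n).filter P).card := by
  rw [← Set.ncard_coe_finset]
  congr
  ext
  simp [mem_cube]

theorem burton_keane_trifurcation_general (d : ℕ)
    (μ : Measure (Ed d → Bool)) (hprob : IsProbabilityMeasure μ)
    (htrans : ∀ v : Vd d, μ.map (fun ω (e : Ed d) => ω (e.1 + v, e.2)) = μ) :
    (∀ n : ℕ, 1 ≤ n →
      (∫⁻ ω, (Set.ncard {x : Vd d | (∀ i, |x i| ≤ (n : ℤ)) ∧ Trifurcation ω x} : ℝ≥0∞) ∂μ)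
        ≤ (((2 * n + 1) ^ d - (2 * n - 1) ^ d : ℕ) : ℝ≥0∞)) ∧
    Filter.Tendsto
      (fun n : ℕ =>
        (∫⁻ ω, (Set.ncard {x : Vd d | (∀ i, |x i| ≤ (n : ℤ)) ∧ Trifurcation ω x} : ℝ≥0∞) ∂μ)
          / (((2 * n + 1) ^ d : ℕ) : ℝ≥0∞))
      Filter.atTop (nhds 0) := by
  classical
  have hzero : ∀ n : ℕ,
      ∫⁻ ω, (Set.ncard {x : Vd d | (∀ i, |x i| ≤ (n : ℤ)) ∧ Trifurcation ω x} : ℝ≥0∞) ∂μ = 0 := by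
    intro n
    simp_rw [ncard_setOf_abs_le_and]
    rw [lintegral_card_filter μ (cube d n) (p := fun x ω => Trifurcation ω x)
      fun x _ => measurableSet_trifurcation x]
    exact Finset.sum_eq_zero fun x _ => measure_trifurcation_eq_zero μ htrans x
  refine ⟨fun n _ => (hzero n).trans_le zero_le, ?_⟩
  simpa only [hzero, ENNReal.zero_div] using tendsto_const_nhds

/-- **Burton–Keane trifurcation bound**: for a translation-invariant finite-energy measure
`μ` on bond configurations of `ℤ^d`, the expected number of trifurcation points in the box
`[−n,n]^d` is at most the number of boundary vertices of the box; hence the density of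
trifurcation points is zero. -/
theorem burton_keane_trifurcation (d : ℕ) (hd : 2 ≤ d)
    (μ : Measure (Ed d → Bool)) (hprob : IsProbabilityMeasure μ)
    (htrans : ∀ v : Vd d, μ.map (fun ω (e : Ed d) => ω (e.1 + v, e.2)) = μ)
    (hfe : ∀ (e : Ed d) (b : Bool) (A : Set (Ed d → Bool)), MeasurableSet A → 0 < μ A →
        0 < μ ((fun ω (f : Ed d) => if f = e then b else ω f) '' A)) :
    (∀ n : ℕ, 1 ≤ n →
      (∫⁻ ω, (Set.ncard {x : Vd d | (∀ i, |x i| ≤ (n : ℤ)) ∧ Trifurcation ω x} : ℝ≥0∞) ∂μ)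
        ≤ (((2 * n + 1) ^ d - (2 * n - 1) ^ d : ℕ) : ℝ≥0∞)) ∧
    Filter.Tendsto
      (fun n : ℕ =>
        (∫⁻ ω, (Set.ncard {x : Vd d | (∀ i, |x i| ≤ (n : ℤ)) ∧ Trifurcation ω x} : ℝ≥0∞) ∂μ)
          / (((2 * n + 1) ^ d : ℕ) : ℝ≥0∞))
      Filter.atTop (nhds 0) :=
  burton_keane_trifurcation_general d μ hprob htrans
end

section
/- (Margulis–Russo formula, derivative form via influences.) For a finite set E, any event A ⊆ {0,1}^E (not necessarily increasing), the function p ↦ P_p(A) is differentiable on (0,1) with derivative equal to the sum over e ∈ E of [P_p(ω^e ∈ A, ω_e ∉ A) − P_p(ω_e ∈ A, ω^e ∉ A)]. -/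
/-!
`P_q(A) = ∑_{ω ∈ A} ∏_e w_q(ω(e))` with `w_q(1) = q` and `w_q(0) = 1 - q` is a polynomial in `q`.
By the product rule its derivative is the sum over `e` of the same sum with the factor `w_q(ω(e))`
replaced by `±1`. Grouping configurations that agree off `e` into pairs `{ω^e, ω_e}`, a pair
contributes `∏_{f ≠ e} w_q(ω(f)) · (1_A(ω^e) - 1_A(ω_e))` to the `e`-th term; since
`w_q(1) + w_q(0) = 1`, this is also its contribution to `E_q[1_A(ω^e) - 1_A(ω_e)]`, and
`1_A(ω^e) - 1_A(ω_e)` is the difference of the indicators of the two pivotal events.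
-/

open Finset

variable {E : Type*}

noncomputable def bernoulliWeight (q : ℝ) (b : Bool) : ℝ := if b then q else 1 - q

lemma hasDerivAt_bernoulliWeight (b : Bool) (p : ℝ) :
    HasDerivAt (bernoulliWeight · b) (if b then 1 else -1) p := by
  cases b
  · simpa [bernoulliWeight] using (hasDerivAt_id p).const_sub 1
  · simpa [bernoulliWeight] using hasDerivAt_id' p

section

variable [DecidableEq E]

lemma upd_funSplitAt_symm (e : E) (b c : Bool) (η : {f // f ≠ e} → Bool) :
    upd ((Equiv.funSplitAt e Bool).symm (b, η)) e c = (Equiv.funSplitAt e Bool).symm (c, η) := by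
  funext f
  by_cases h : f = e <;> simp [upd, h]

lemma indicator_upd_sub_indicator_upd (A : Set (E → Bool)) (e : E) (ω : E → Bool) :
    A.indicator 1 (upd ω e true) - A.indicator 1 (upd ω e false) =
      ({ω | upd ω e true ∈ A ∧ upd ω e false ∉ A}.indicator 1 -
        {ω | upd ω e false ∈ A ∧ upd ω e true ∉ A}.indicator 1 : (E → Bool) → ℝ) ω := by
  by_cases h₁ : upd ω e true ∈ A <;> by_cases h₂ : upd ω e false ∈ A <;>
    simp [Set.indicator, h₁, h₂]

variable [Fintype E]

lemma sum_eq_sum_funSplitAt {β M : Type*} [Fintype β] [AddCommMonoid M] (e : E)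
    (F : (E → β) → M) :
    ∑ ω, F ω = ∑ η : {f // f ≠ e} → β, ∑ b, F ((Equiv.funSplitAt e β).symm (b, η)) := by
  rw [← (Equiv.funSplitAt e β).symm.sum_comp F, Fintype.sum_prod_type, sum_comm]

lemma prod_subtype_ne_funSplitAt_symm {β M : Type*} [CommMonoid M] (φ : β → M) (e : E) (b : β)
    (η : {f // f ≠ e} → β) :
    ∏ f : {f // f ≠ e}, φ ((Equiv.funSplitAt e β).symm (b, η) f) = ∏ f, φ (η f) :=
  Fintype.prod_congr _ _ fun f => by simp [f.2]

noncomputable def bernoulliExpect (q : ℝ) (g : (E → Bool) → ℝ) : ℝ :=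
  ∑ ω, (∏ e, bernoulliWeight q (ω e)) * g ω

lemma bernoulliExpect_sub (q : ℝ) (g h : (E → Bool) → ℝ) :
    bernoulliExpect q (g - h) = bernoulliExpect q g - bernoulliExpect q h := by
  simp only [bernoulliExpect, Pi.sub_apply, mul_sub, sum_sub_distrib]

lemma Pr_eq_bernoulliExpect (q : ℝ) (A : Set (E → Bool)) :
    Pr q A = bernoulliExpect q (A.indicator 1) := by
  simp only [Pr, bernoulliExpect, bernoulliWeight, Set.indicator, Pi.one_apply, mul_ite, mul_one,
    mul_zero]
  -- `Pr` uses the classical `Fintype (E → Bool)` instance, not the one from `[DecidableEq E]`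
  convert rfl

lemma hasDerivAt_prod_bernoulliWeight (ω : E → Bool) (p : ℝ) :
    HasDerivAt (fun q => ∏ e, bernoulliWeight q (ω e))
      (∑ e, (if ω e then 1 else -1) * ∏ f : {f // f ≠ e}, bernoulliWeight p (ω f)) p := by
  refine (HasDerivAt.fun_finsetProd fun e _ => hasDerivAt_bernoulliWeight (ω e) p).congr_deriv
    (sum_congr rfl fun e _ => ?_)
  rw [smul_eq_mul, mul_comm, prod_subtype (p := (· ≠ e)) _ fun f => by simp]

lemma bernoulliExpect_sub_upd (p : ℝ) (g : (E → Bool) → ℝ) (e : E) :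
    bernoulliExpect p (fun ω => g (upd ω e true) - g (upd ω e false)) =
      ∑ ω, (if ω e then 1 else -1) * (∏ f : {f // f ≠ e}, bernoulliWeight p (ω f)) * g ω := by
  rw [bernoulliExpect, sum_eq_sum_funSplitAt e, sum_eq_sum_funSplitAt e]
  refine sum_congr rfl fun η _ => ?_
  simp only [Fintype.sum_bool, Fintype.prod_eq_mul_prod_subtype_ne _ e, upd_funSplitAt_symm,
    prod_subtype_ne_funSplitAt_symm (bernoulliWeight p)]
  simp only [bernoulliWeight, Equiv.funSplitAt_symm_apply, ↓reduceDIte, ↓reduceIte,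
    Bool.false_eq_true]
  ring

theorem hasDerivAt_bernoulliExpect (g : (E → Bool) → ℝ) (p : ℝ) :
    HasDerivAt (fun q => bernoulliExpect q g)
      (∑ e, bernoulliExpect p (fun ω => g (upd ω e true) - g (upd ω e false))) p := by
  refine (HasDerivAt.fun_sum fun ω _ =>
    (hasDerivAt_prod_bernoulliWeight ω p).mul_const (g ω)).congr_deriv ?_
  simp only [bernoulliExpect_sub_upd, sum_mul]
  exact sum_comm

end

theorem margulis_russo_general_general [Fintype E] [DecidableEq E] (A : Set (E → Bool))
    (p : ℝ) :
    HasDerivAt (fun q => Pr q A)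
      (∑ e : E,
        (Pr p {ω | upd ω e true ∈ A ∧ upd ω e false ∉ A} -
          Pr p {ω | upd ω e false ∈ A ∧ upd ω e true ∉ A})) p := by
  simp only [Pr_eq_bernoulliExpect, ← bernoulliExpect_sub]
  refine (hasDerivAt_bernoulliExpect (A.indicator 1) p).congr_deriv (sum_congr rfl fun e _ => ?_)
  exact congrArg _ (funext (indicator_upd_sub_indicator_upd A e))

/-- **Margulis–Russo formula** for general (not necessarily increasing) events: `p ↦ P_p(A)`
is differentiable on `(0,1)` with derivative
`∑_e [P_p(ω^e ∈ A, ω_e ∉ A) − P_p(ω_e ∈ A, ω^e ∉ A)]`. -/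
theorem margulis_russo_general [Fintype E] [DecidableEq E] (A : Set (E → Bool))
    (p : ℝ) (hp : p ∈ Set.Ioo (0 : ℝ) 1) :
    HasDerivAt (fun q => Pr q A)
      (∑ e : E,
        (Pr p {ω | upd ω e true ∈ A ∧ upd ω e false ∉ A} -
          Pr p {ω | upd ω e false ∈ A ∧ upd ω e true ∉ A})) p :=
  margulis_russo_general_general A p
end
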